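/- Let H be a real inner product space, T ≥ 2, and for each t ∈ {2, …, T} let ℓ̄_t, ℓ̂_t : H → ℝ be convex differentiable functions whose gradients are bounded in norm by G everywhere. Fix step sizes η > 0 and γ > 0. Starting from w₁ = 0, define for t = 2, …, T the updates w'_t = w_{t−1} − η·∇ℓ̄_t(w_{t−1}) and w_t = w'_t − γ·∇ℓ̂_t(w'_t). Then for every u ∈ H: Σ_{t=2}^T ℓ̄_t(w_{t−1}) − Σ_{t=2}^T ℓ̄_t(u) ≤ ‖u‖²/(2η) + (T−1)·G²(η + γ)²/(2η) − (γ/η)·Σ_{t=2}^T ⟨∇ℓ̂_t(w'_t), w_{t−1} − u⟩. -/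

import Mathlib

open scoped RealInnerProductSpace
open Finset

/-!
Composing the two updates, `wₜ = wₜ₋₁ - (η ∇ℓ̄ₜ(wₜ₋₁) + γ ∇ℓ̂ₜ(w'ₜ))`, a single step of length at
most `(η + γ) G`. Expanding `‖wₜ - u‖²` writes `2η⟪∇ℓ̄ₜ(wₜ₋₁), wₜ₋₁ - u⟫` as the drop
`‖wₜ₋₁ - u‖² - ‖wₜ - u‖²` plus at most `G²(η + γ)²` minus the `γ`-cross term, and by convexity
this inner product dominates the regret of round `t`. Summing, the drops telescope to at most
`‖w₁ - u‖² = ‖u‖²`.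
-/

theorem ConvexOn.hasFDerivAt_apply_sub_le {E : Type*} [NormedAddCommGroup E] [NormedSpace ℝ E]
    {s : Set E} {f : E → ℝ} {f' : E →L[ℝ] ℝ} {x y : E} (hf : ConvexOn ℝ s f) (hx : x ∈ s)
    (hy : y ∈ s) (hf' : HasFDerivAt f f' x) : f' (y - x) ≤ f y - f x := by
  have hline : ConvexOn ℝ (AffineMap.lineMap (k := ℝ) x y ⁻¹' s) (f ∘ AffineMap.lineMap x y) :=
    hf.comp_affineMap _
  have hderiv : HasDerivAt (f ∘ AffineMap.lineMap x y) (f' (y - x)) (0 : ℝ) := by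
    refine hf'.comp_hasDerivAt_of_eq _ AffineMap.hasDerivAt_lineMap ?_
    simp
  simpa [slope_def_field] using
    hline.le_slope_of_hasDerivAt (by simpa using hx) (by simpa using hy) zero_lt_one hderiv

section InnerProductSpace

variable {H : Type*} [NormedAddCommGroup H] [InnerProductSpace ℝ H]

theorem ConvexOn.sub_le_inner_gradient [CompleteSpace H] {s : Set H} {f : H → ℝ} {x y : H}
    (hf : ConvexOn ℝ s f) (hx : x ∈ s) (hy : y ∈ s) (hfx : DifferentiableAt ℝ f x) :
    f x - f y ≤ ⟪gradient f x, x - y⟫ := by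
  have := hf.hasFDerivAt_apply_sub_le hx hy hfx.hasGradientAt.hasFDerivAt
  rw [InnerProductSpace.toDual_apply_apply, ← neg_sub x y, inner_neg_right] at this
  linarith

theorem norm_smul_add_smul_le {g q : H} {η γ G : ℝ} (hη : 0 ≤ η) (hγ : 0 ≤ γ)
    (hg : ‖g‖ ≤ G) (hq : ‖q‖ ≤ G) : ‖η • g + γ • q‖ ≤ (η + γ) * G :=
  calc ‖η • g + γ • q‖ ≤ ‖η • g‖ + ‖γ • q‖ := norm_add_le _ _
    _ = η * ‖g‖ + γ * ‖q‖ := by rw [norm_smul_of_nonneg hη, norm_smul_of_nonneg hγ]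
    _ ≤ η * G + γ * G := by gcongr
    _ = (η + γ) * G := by ring

theorem inner_le_of_two_step_descent {x x' y u g q : H} {η γ G : ℝ} (hη : 0 < η) (hγ : 0 ≤ γ)
    (hg : ‖g‖ ≤ G) (hq : ‖q‖ ≤ G) (hx' : x' = x - η • g) (hy : y = x' - γ • q) :
    ⟪g, x - u⟫ ≤ (‖x - u‖ ^ 2 - ‖y - u‖ ^ 2) / (2 * η) + G ^ 2 * (η + γ) ^ 2 / (2 * η)
      - γ / η * ⟪q, x - u⟫ := by
  have hexpand : ‖y - u‖ ^ 2 = ‖x - u‖ ^ 2 - 2 * η * ⟪g, x - u⟫ - 2 * γ * ⟪q, x - u⟫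
      + ‖η • g + γ • q‖ ^ 2 := by
    rw [hy, hx', show x - η • g - γ • q - u = (x - u) - (η • g + γ • q) by abel,
      norm_sub_sq_real, inner_add_right, real_inner_smul_right, real_inner_smul_right,
      real_inner_comm g, real_inner_comm q]
    ring
  have hstep : ‖η • g + γ • q‖ ^ 2 ≤ G ^ 2 * (η + γ) ^ 2 := by
    have := norm_smul_add_smul_le hη.le hγ hg hq
    nlinarith [norm_nonneg (η • g + γ • q)]
  have hγη : γ / η * ⟪q, x - u⟫ = 2 * γ * ⟪q, x - u⟫ / (2 * η) := by
    field_simp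
  rw [hγη, ← add_div, ← sub_div, le_div_iff₀ (by positivity)]
  linarith

end InnerProductSpace

theorem Finset.sum_Icc_sub_pred_sub {M : Type*} [AddCommGroup M] (f : ℕ → M) {m n : ℕ}
    (hmn : m ≤ n) : ∑ t ∈ Icc (m + 1) n, (f (t - 1) - f t) = f m - f n := by
  induction n, hmn using Nat.le_induction with
  | base => simp
  | succ n hmn ih =>
    rw [sum_Icc_succ_top (by omega), ih, Nat.add_sub_cancel]
    abel

theorem aogd_summed_regret_bound_general
    {H : Type*} [NormedAddCommGroup H] [InnerProductSpace ℝ H] [CompleteSpace H]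
    (T : ℕ) (hT : 2 ≤ T)
    (ℓbar ℓhat : ℕ → H → ℝ) (G : ℝ)
    (hbar_cvx : ∀ t ∈ Finset.Icc 2 T, ConvexOn ℝ Set.univ (ℓbar t))
    (hbar_diff : ∀ t ∈ Finset.Icc 2 T, Differentiable ℝ (ℓbar t))
    (hbar_grad : ∀ t ∈ Finset.Icc 2 T, ∀ w : H, ‖gradient (ℓbar t) w‖ ≤ G)
    (hhat_grad : ∀ t ∈ Finset.Icc 2 T, ∀ w : H, ‖gradient (ℓhat t) w‖ ≤ G)
    (η γ : ℝ) (hη : 0 < η) (hγ : 0 < γ)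
    (w w' : ℕ → H)
    (hw1 : w 1 = 0)
    (hw' : ∀ t ∈ Finset.Icc 2 T, w' t = w (t - 1) - η • gradient (ℓbar t) (w (t - 1)))
    (hw : ∀ t ∈ Finset.Icc 2 T, w t = w' t - γ • gradient (ℓhat t) (w' t))
    (u : H) :
    ∑ t ∈ Finset.Icc 2 T, ℓbar t (w (t - 1)) - ∑ t ∈ Finset.Icc 2 T, ℓbar t u ≤
      ‖u‖ ^ 2 / (2 * η) + ((T : ℝ) - 1) * G ^ 2 * (η + γ) ^ 2 / (2 * η)
        - (γ / η) * ∑ t ∈ Finset.Icc 2 T, ⟪gradient (ℓhat t) (w' t), w (t - 1) - u⟫ := by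
  have hround : ∀ t ∈ Icc 2 T, ℓbar t (w (t - 1)) - ℓbar t u ≤
      (‖w (t - 1) - u‖ ^ 2 - ‖w t - u‖ ^ 2) / (2 * η) + G ^ 2 * (η + γ) ^ 2 / (2 * η)
        - γ / η * ⟪gradient (ℓhat t) (w' t), w (t - 1) - u⟫ := fun t ht =>
    ((hbar_cvx t ht).sub_le_inner_gradient trivial trivial (hbar_diff t ht _)).trans
      (inner_le_of_two_step_descent hη hγ.le (hbar_grad t ht _) (hhat_grad t ht _)
        (hw' t ht) (hw t ht))
  have hcard : ((#(Icc 2 T) : ℕ) : ℝ) = T - 1 := by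
    rw [Nat.card_Icc, Nat.cast_sub (by omega)]
    push_cast
    ring
  have htelescope : ∑ t ∈ Icc 2 T, (‖w (t - 1) - u‖ ^ 2 - ‖w t - u‖ ^ 2) = ‖u‖ ^ 2 - ‖w T - u‖ ^ 2 := by
    rw [← norm_neg, neg_eq_zero_sub, ← hw1]
    exact sum_Icc_sub_pred_sub (fun t => ‖w t - u‖ ^ 2) (by omega)
  have hlast : 0 ≤ ‖w T - u‖ ^ 2 / (2 * η) := by positivity
  calc ∑ t ∈ Icc 2 T, ℓbar t (w (t - 1)) - ∑ t ∈ Icc 2 T, ℓbar t u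
      = ∑ t ∈ Icc 2 T, (ℓbar t (w (t - 1)) - ℓbar t u) := (sum_sub_distrib ..).symm
    _ ≤ _ := sum_le_sum hround
    _ = (‖u‖ ^ 2 - ‖w T - u‖ ^ 2) / (2 * η) + ((T : ℝ) - 1) * G ^ 2 * (η + γ) ^ 2 / (2 * η)
          - γ / η * ∑ t ∈ Icc 2 T, ⟪gradient (ℓhat t) (w' t), w (t - 1) - u⟫ := by
      rw [sum_sub_distrib, sum_add_distrib, ← sum_div, htelescope, sum_const, nsmul_eq_mul, hcard,
        ← mul_sum]
      ring
    _ ≤ _ := by rw [sub_div]; linarith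

/-- **Summed online gradient descent bound for the two-step AOGD update**
(Lemma 2 in the paper's appendix). Starting from `w 1 = 0`, with updates
`w' t = w (t−1) − η∇ℓ̄ₜ(w (t−1))` and `w t = w' t − γ∇ℓ̂ₜ(w' t)` for `t = 2, …, T`,
the cumulative regret of the average-based losses `ℓ̄ₜ` against any `u` is bounded. -/
theorem aogd_summed_regret_bound
    {H : Type*} [NormedAddCommGroup H] [InnerProductSpace ℝ H] [CompleteSpace H]
    (T : ℕ) (hT : 2 ≤ T)
    (ℓbar ℓhat : ℕ → H → ℝ) (G : ℝ)
    (hbar_cvx : ∀ t ∈ Finset.Icc 2 T, ConvexOn ℝ Set.univ (ℓbar t))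
    (hhat_cvx : ∀ t ∈ Finset.Icc 2 T, ConvexOn ℝ Set.univ (ℓhat t))
    (hbar_diff : ∀ t ∈ Finset.Icc 2 T, Differentiable ℝ (ℓbar t))
    (hhat_diff : ∀ t ∈ Finset.Icc 2 T, Differentiable ℝ (ℓhat t))
    (hbar_grad : ∀ t ∈ Finset.Icc 2 T, ∀ w : H, ‖gradient (ℓbar t) w‖ ≤ G)
    (hhat_grad : ∀ t ∈ Finset.Icc 2 T, ∀ w : H, ‖gradient (ℓhat t) w‖ ≤ G)
    (η γ : ℝ) (hη : 0 < η) (hγ : 0 < γ)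
    (w w' : ℕ → H)
    (hw1 : w 1 = 0)
    (hw' : ∀ t ∈ Finset.Icc 2 T, w' t = w (t - 1) - η • gradient (ℓbar t) (w (t - 1)))
    (hw : ∀ t ∈ Finset.Icc 2 T, w t = w' t - γ • gradient (ℓhat t) (w' t))
    (u : H) :
    ∑ t ∈ Finset.Icc 2 T, ℓbar t (w (t - 1)) - ∑ t ∈ Finset.Icc 2 T, ℓbar t u ≤
      ‖u‖ ^ 2 / (2 * η) + ((T : ℝ) - 1) * G ^ 2 * (η + γ) ^ 2 / (2 * η)
        - (γ / η) * ∑ t ∈ Finset.Icc 2 T, ⟪gradient (ℓhat t) (w' t), w (t - 1) - u⟫ :=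
  aogd_summed_regret_bound_general T hT ℓbar ℓhat G hbar_cvx hbar_diff hbar_grad hhat_grad η γ hη hγ
    w w' hw1 hw' hw u
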